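/- arXiv:1302.3940 — 4 statements merged into one kernel-verified Lean document; each statement's English description precedes it below -/
import Mathlib

section
/- If X is a synchronized system with infinitely many points and φ is a flip for (X, σ_X), then at least one of the two sets A(φ) and A(σ_X∘φ) is non-empty. -/
open Set Function

/-- The map `x ↦ σᵐ(x)` on the full shift `A^ℤ`, where `σᵐ(x)_i = x_{i+m}`. -/
def shiftZ (A : Type*) (m : ℤ) : (ℤ → A) → ℤ → A := fun x i => x (i + m)

/-- The shift map `σ` on the full shift `A^ℤ`: `σ(x)_i = x_{i+1}`. -/
abbrev shiftMap (A : Type*) : (ℤ → A) → ℤ → A := shiftZ A 1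

/-- The inverse shift map `σ⁻¹`: `σ⁻¹(x)_i = x_{i-1}`. -/
abbrev shiftInv (A : Type*) : (ℤ → A) → ℤ → A := shiftZ A (-1)

/-- The reversal map `ρ`: `ρ(x)_i = x_{-i}`. -/
def revMap (A : Type*) : (ℤ → A) → ℤ → A := fun x i => x (-i)

/-- A shift space over `A`: a nonempty closed subset of `A^ℤ` with `σ(X) = X`. -/
def IsShiftSpace {A : Type*} [TopologicalSpace A] (X : Set (ℤ → A)) : Prop :=
  X.Nonempty ∧ IsClosed X ∧ shiftMap A '' X = X

/-- The word `w` occurs in `x` at position `i`, i.e. `x_{[i, i+|w|-1]} = w`. -/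
def OccursAt {A : Type*} (w : List A) (x : ℤ → A) (i : ℤ) : Prop :=
  ∀ k : Fin w.length, x (i + (k : ℕ)) = w.get k

/-- `w` is a block of `X`: it occurs in some point of `X`. -/
def IsBlockOf {A : Type*} (X : Set (ℤ → A)) (w : List A) : Prop :=
  ∃ x ∈ X, ∃ i : ℤ, OccursAt w x i

/-- `X` is irreducible: any two blocks can be joined by a block. -/
def ShiftIrreducible {A : Type*} (X : Set (ℤ → A)) : Prop :=
  ∀ u v : List A, IsBlockOf X u → IsBlockOf X v → ∃ w : List A, IsBlockOf X (u ++ w ++ v)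

/-- `w` is a finitary (intrinsically synchronizing) block of `X`. -/
def IsFinitary {A : Type*} (X : Set (ℤ → A)) (w : List A) : Prop :=
  IsBlockOf X w ∧ ∀ u v : List A, IsBlockOf X (u ++ w) → IsBlockOf X (w ++ v) →
    IsBlockOf X (u ++ w ++ v)

/-- A synchronized system: an irreducible shift space with a finitary block. -/
def IsSynchronized {A : Type*} [TopologicalSpace A] (X : Set (ℤ → A)) : Prop :=
  IsShiftSpace X ∧ ShiftIrreducible X ∧ ∃ w : List A, IsFinitary X w

/-- `φ` (as a map of the ambient full shift) restricts to a flip for `(X, σ_X)`: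
a homeomorphism `X → X` with `φ ∘ φ = id` and `φ ∘ σ_X = σ_X⁻¹ ∘ φ`.
(Being a homeomorphism is automatic from continuity and `φ ∘ φ = id` on `X`.) -/
def IsFlip {A : Type*} [TopologicalSpace A] (X : Set (ℤ → A))
    (φ : (ℤ → A) → ℤ → A) : Prop :=
  MapsTo φ X X ∧ ContinuousOn φ X ∧ (∀ x ∈ X, φ (φ x) = x) ∧
    ∀ x ∈ X, φ (shiftMap A x) = shiftInv A (φ x)

/-- The shift-flip systems `(X, σ_X, φ)` and `(Y, σ_Y, ψ)` are conjugate: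
there is a homeomorphism `Φ : X → Y` with `Φ ∘ σ_X = σ_Y ∘ Φ` and `Φ ∘ φ = ψ ∘ Φ`. -/
def SystemConj {A B : Type*} [TopologicalSpace A] [TopologicalSpace B]
    (X : Set (ℤ → A)) (φ : (ℤ → A) → ℤ → A)
    (Y : Set (ℤ → B)) (ψ : (ℤ → B) → ℤ → B) : Prop :=
  ∃ (Φ : (ℤ → A) → ℤ → B) (Ψ : (ℤ → B) → ℤ → A),
    MapsTo Φ X Y ∧ ContinuousOn Φ X ∧ MapsTo Ψ Y X ∧ ContinuousOn Ψ Y ∧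
    InvOn Ψ Φ X Y ∧
    (∀ x ∈ X, Φ (shiftMap A x) = shiftMap B (Φ x)) ∧ ∀ x ∈ X, Φ (φ x) = ψ (Φ x)

/-- Two flips `φ, φ'` for `(X, σ_X)` are conjugate. -/
def FlipConj {A : Type*} [TopologicalSpace A] (X : Set (ℤ → A))
    (φ φ' : (ℤ → A) → ℤ → A) : Prop :=
  SystemConj X φ X φ'

/-- `F(φ; n) = {x ∈ X : σ_X^n(x) = x and φ(x) = x}`. -/
def flipFix {A : Type*} (X : Set (ℤ → A)) (φ : (ℤ → A) → ℤ → A) (n : ℕ) :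
    Set (ℤ → A) :=
  {x ∈ X | (shiftMap A)^[n] x = x ∧ φ x = x}

/-- `A(φ)`: points of `X` in which some finitary block occurs infinitely often and
which differ from their `φ`-image in at least one but only finitely many coordinates. -/
def flipAsym {A : Type*} (X : Set (ℤ → A)) (φ : (ℤ → A) → ℤ → A) :
    Set (ℤ → A) :=
  {x ∈ X | (∃ w : List A, IsFinitary X w ∧ {i : ℤ | OccursAt w x i}.Infinite) ∧
    {i : ℤ | φ x i ≠ x i}.Nonempty ∧ {i : ℤ | φ x i ≠ x i}.Finite}

/-- `x` is a bi-infinite concatenation of words from `C`. -/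
def IsConcat {A : Type*} (C : Set (List A)) (x : ℤ → A) : Prop :=
  ∃ t : ℤ → ℤ, StrictMono t ∧ (∀ n : ℤ, ∃ j : ℤ, t j ≤ n ∧ n < t (j + 1)) ∧
    ∀ j : ℤ, ∃ w ∈ C, t (j + 1) = t j + w.length ∧ OccursAt w x (t j)

/-- A coded system: a shift space in which the set of bi-infinite concatenations of
words from some code `C` is dense. -/
def IsCoded {A : Type*} [TopologicalSpace A] (X : Set (ℤ → A)) : Prop :=
  IsShiftSpace X ∧ ∃ C : Set (List A), closure {x | IsConcat C x} = X

/-!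
Fix a finitary block `w`. A flip is a reflected sliding block code: coordinate `i` of `φ x` only
depends on `x` near `-i`. Irreducibility and finitarity give a periodic point `p` (period `N`)
containing `w` and a block forcing `w` into `φ p`, say at `g`; as `X` is infinite, some block of
`X` misses `p`, and irreducibility joins it to a block `w m w` that misses `p` too. For a shift
`z` of `p`, splice `φ z`, `w m w` and `z` along copies of `w`; finitarity puts the result `x`
in `X`. As `x = φ z` far to the left, `x = z` far to the right and `φ` exchanges the two
ends, `x` and `φ x` differ in finitely many places, and `φ x = x` would force `w m w` into `z`.
Placing the splice points `S` and `S + |w m|` on copies of `w` in `φ z` and in `z` needs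
`2S ≡ g - |w m| (mod N)`; when `g - |w m|` is odd, replacing `φ` by `σ ∘ φ` moves `g` by one.
-/

section

variable {A : Type*}

theorem shiftZ_apply (m : ℤ) (x : ℤ → A) (i : ℤ) : shiftZ A m x i = x (i + m) := rfl

theorem shiftZ_shiftZ (m n : ℤ) (x : ℤ → A) :
    shiftZ A m (shiftZ A n x) = shiftZ A (m + n) x := by
  funext i
  simp only [shiftZ_apply, add_assoc]

theorem shiftZ_zero (x : ℤ → A) : shiftZ A 0 x = x := by
  funext i
  simp only [shiftZ_apply, add_zero]

theorem mem_shiftZ {X : Set (ℤ → A)} (himg : shiftMap A '' X = X) {x : ℤ → A} (hx : x ∈ X)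
    (k : ℤ) : shiftZ A k x ∈ X := by
  induction k using Int.induction_on with
  | zero => rwa [shiftZ_zero]
  | succ n ih => rw [add_comm, ← shiftZ_shiftZ, ← himg]; exact mem_image_of_mem _ ih
  | pred n ih =>
    rw [← himg] at ih
    obtain ⟨y, hy, hyx⟩ := ih
    rwa [sub_eq_neg_add, ← shiftZ_shiftZ, ← hyx, shiftZ_shiftZ, neg_add_cancel, shiftZ_zero]

theorem occursAt_iff {w : List A} {x : ℤ → A} {i : ℤ} :
    OccursAt w x i ↔ ∀ k (hk : k < w.length), x (i + k) = w[k] :=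
  ⟨fun h k hk => h ⟨k, hk⟩, fun h k => h k k.2⟩

theorem occursAt_append_iff {u v : List A} {x : ℤ → A} {i : ℤ} :
    OccursAt (u ++ v) x i ↔ OccursAt u x i ∧ OccursAt v x (i + u.length) := by
  simp only [occursAt_iff, List.length_append, List.getElem_append]
  refine ⟨fun h => ⟨fun k hk => ?_, fun k hk => ?_⟩, fun ⟨hu, hv⟩ k hk => ?_⟩
  · simpa [hk] using h k (by omega)
  · have := h (u.length + k) (by omega)
    simp only [Nat.add_sub_cancel_left, show ¬ u.length + k < u.length by omega,
      dite_false] at this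
    rw [← this]; push_cast; ring_nf
  · split_ifs with hku
    · exact hu k hku
    · rw [← hv (k - u.length) (by omega)]; congr 1; omega

theorem occursAt_shiftZ_iff {w : List A} {x : ℤ → A} {i m : ℤ} :
    OccursAt w (shiftZ A m x) i ↔ OccursAt w x (i + m) := by
  simp only [occursAt_iff, shiftZ_apply, add_right_comm]

theorem OccursAt.eqOn {w : List A} {x y : ℤ → A} {i : ℤ} (hx : OccursAt w x i)
    (hy : OccursAt w y i) : EqOn x y (Ico i (i + w.length)) := by
  rintro j ⟨hij, hji⟩
  obtain ⟨k, rfl⟩ : ∃ k : ℕ, j = i + k := ⟨(j - i).toNat, by omega⟩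
  exact (occursAt_iff.1 hx k (by omega)).trans (occursAt_iff.1 hy k (by omega)).symm

theorem OccursAt.congr {w : List A} {x y : ℤ → A} {i : ℤ} (hx : OccursAt w x i)
    (h : EqOn x y (Ico i (i + w.length))) : OccursAt w y i := fun k =>
  (h ⟨by omega, by have := k.2; omega⟩).symm.trans (hx k)

def word (x : ℤ → A) (i : ℤ) (n : ℕ) : List A := List.ofFn fun k : Fin n => x (i + k)

@[simp] theorem word_length (x : ℤ → A) (i : ℤ) (n : ℕ) : (word x i n).length = n :=
  List.length_ofFn

theorem occursAt_word (x : ℤ → A) (i : ℤ) (n : ℕ) : OccursAt (word x i n) x i := by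
  simp [occursAt_iff, word]

theorem IsBlockOf.exists_occursAt {X : Set (ℤ → A)} (himg : shiftMap A '' X = X) {w : List A}
    (hw : IsBlockOf X w) (i : ℤ) : ∃ x ∈ X, OccursAt w x i := by
  obtain ⟨x, hx, j, hj⟩ := hw
  exact ⟨shiftZ A (j - i) x, mem_shiftZ himg hx _, occursAt_shiftZ_iff.2 (by rwa [add_sub_cancel])⟩

theorem IsClosed.mem_of_forall_eqOn_Icc [TopologicalSpace A] {Y : Set (ℤ → A)}
    (hY : IsClosed Y) {x : ℤ → A} (h : ∀ n : ℕ, ∃ y ∈ Y, EqOn y x (Icc (-n) n)) : x ∈ Y := by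
  choose y hyY hyx using h
  have hlim : Filter.Tendsto y Filter.atTop (nhds x) := by
    refine tendsto_pi_nhds.2 fun j => Filter.Tendsto.congr' ?_ tendsto_const_nhds
    filter_upwards [Filter.eventually_ge_atTop j.natAbs] with n hn
    exact (hyx n ⟨by omega, by omega⟩).symm
  exact hY.mem_of_tendsto hlim (.of_forall hyY)

def HasRadius (X : Set (ℤ → A)) (ψ : (ℤ → A) → ℤ → A) (M : ℕ) : Prop :=
  ∀ x ∈ X, ∀ y ∈ X, EqOn x y (Icc (-M) M) → ψ x 0 = ψ y 0

theorem ContinuousOn.exists_hasRadius [Fintype A] [TopologicalSpace A] [DiscreteTopology A]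
    {X : Set (ℤ → A)} (hcl : IsClosed X) {ψ : (ℤ → A) → ℤ → A} (hψ : ContinuousOn ψ X) :
    ∃ M, HasRadius X ψ M := by
  -- otherwise pairs of points agreeing on ever larger windows but not at `ψ · 0` have, along a
  -- subsequence, a common limit, at which `ψ · 0` is discontinuous
  by_contra! hno
  unfold HasRadius at hno
  push Not at hno
  choose xs hxs ys hys hagree hne using hno
  obtain ⟨a, haX, k, hk, hxa⟩ := hcl.isCompact.tendsto_subseq hxs
  have hya : Filter.Tendsto (ys ∘ k) Filter.atTop (nhds a) := by
    refine tendsto_pi_nhds.2 fun j => (tendsto_pi_nhds.1 hxa j).congr' ?_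
    filter_upwards [Filter.eventually_ge_atTop j.natAbs] with n hn
    have := hk.le_apply (x := n)
    exact hagree (k n) ⟨by omega, by omega⟩
  have hψ0 : ∀ s : ℕ → ℤ → A, (∀ n, s n ∈ X) → Filter.Tendsto s Filter.atTop (nhds a) →
      ∀ᶠ n in Filter.atTop, ψ (s n) 0 = ψ a 0 := fun s hs hsa => by
    have := ((continuous_apply 0).tendsto _).comp <| (hψ a haX).tendsto.comp <|
      tendsto_nhdsWithin_of_tendsto_nhds_of_eventually_within _ hsa (.of_forall hs)
    rwa [nhds_discrete, Filter.tendsto_pure] at this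
  obtain ⟨n, hxn, hyn⟩ :=
    ((hψ0 _ (fun n => hxs (k n)) hxa).and (hψ0 _ (fun n => hys (k n)) hya)).exists
  exact hne (k n) (hxn.trans hyn.symm)

theorem mem_of_forall_exists_block [TopologicalSpace A] {X : Set (ℤ → A)} (hcl : IsClosed X)
    (himg : shiftMap A '' X = X) {x : ℤ → A}
    (h : ∀ n : ℕ, ∃ u i, IsBlockOf X u ∧ OccursAt u x i ∧ i ≤ -n ∧ (n : ℤ) < i + u.length) :
    x ∈ X := by
  refine hcl.mem_of_forall_eqOn_Icc fun n => ?_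
  obtain ⟨u, i, hu, hux, hin, hni⟩ := h n
  obtain ⟨y, hy, huy⟩ := hu.exists_occursAt himg i
  exact ⟨y, hy, (huy.eqOn hux).mono (Icc_subset_Ico hin hni)⟩

def splice (x y : ℤ → A) (i : ℤ) : ℤ → A := fun j => if j < i then x j else y j

theorem splice_eqOn_Iio (x y : ℤ → A) (i : ℤ) : EqOn (splice x y i) x (Iio i) :=
  fun _ hj => if_pos hj

theorem splice_eqOn_Ici (x y : ℤ → A) (i : ℤ) : EqOn (splice x y i) y (Ici i) :=
  fun _ hj => if_neg (not_lt.2 hj)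

theorem IsFinitary.splice_mem [TopologicalSpace A] {X : Set (ℤ → A)} (hcl : IsClosed X)
    (himg : shiftMap A '' X = X) {w : List A} (hw : IsFinitary X w) {x y : ℤ → A}
    (hx : x ∈ X) (hy : y ∈ X) {i : ℤ} (hxw : OccursAt w x i) (hyw : OccursAt w y i) :
    splice x y i ∈ X := by
  refine mem_of_forall_exists_block hcl himg fun n => ?_
  set a := n + i.natAbs
  have hxLa : OccursAt (word x (i - a) a) x (i - a) := occursAt_word x _ _
  have hyRb : OccursAt (word y (i + w.length) (a + 1)) y (i + w.length) := occursAt_word y _ _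
  have hblock := hw.2 (word x (i - a) a) (word y (i + w.length) (a + 1))
    ⟨x, hx, _, occursAt_append_iff.2 ⟨hxLa, by simpa using hxw⟩⟩
    ⟨y, hy, _, occursAt_append_iff.2 ⟨hyw, hyRb⟩⟩
  refine ⟨_, i - a, hblock, ?_, by omega, by simp; omega⟩
  rw [List.append_assoc, occursAt_append_iff, occursAt_append_iff, word_length, sub_add_cancel]
  refine ⟨hxLa.congr ?_, ?_, hyRb.congr ?_⟩
  · exact (splice_eqOn_Iio x y i).symm.mono fun j hj => by simp at hj ⊢; omega
  · exact hyw.congr ((splice_eqOn_Ici x y i).symm.mono fun j hj => by simp at hj ⊢; omega)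
  · exact (splice_eqOn_Ici x y i).symm.mono fun j hj => by simp at hj ⊢; omega

theorem Function.Periodic.occursAt_add_int_mul {x : ℤ → A} {N : ℤ} (hx : Periodic x N)
    {w : List A} {i : ℤ} (h : OccursAt w x i) (j : ℤ) : OccursAt w x (i + j * N) := fun k => by
  rw [add_right_comm, ← h k]
  exact hx.int_mul j _

theorem Function.Periodic.occursAt_flatten_replicate {P : List A} {x : ℤ → A}
    (hx : Periodic x P.length) {i : ℤ} (h : OccursAt P x i) (k : ℕ) :
    OccursAt (List.replicate k P).flatten x i := by
  induction k generalizing i with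
  | zero => exact fun k => k.elim0
  | succ k ih =>
    rw [List.replicate_succ, List.flatten_cons, occursAt_append_iff]
    exact ⟨h, ih (by simpa using hx.occursAt_add_int_mul h 1)⟩

/-- `a` is a dummy letter, read only when `P = []`. -/
def cyclic (P : List A) (a : A) : ℤ → A := fun i => P.getD (i % P.length).toNat a

theorem periodic_cyclic (P : List A) (a : A) : Periodic (cyclic P a) P.length := fun i => by
  simp only [cyclic, Int.add_emod_right]

theorem occursAt_cyclic (P : List A) (a : A) : OccursAt P (cyclic P a) 0 := by
  refine occursAt_iff.2 fun k hk => ?_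
  rw [cyclic, zero_add, Int.emod_eq_of_lt (by omega) (by omega), Int.toNat_natCast,
    List.getD_eq_getElem]

theorem IsFinitary.isBlockOf_flatten_replicate_append {X : Set (ℤ → A)} {w s : List A}
    (hw : IsFinitary X w) (h : IsBlockOf X (w ++ s ++ w)) (k : ℕ) :
    IsBlockOf X ((List.replicate k (w ++ s)).flatten ++ w) := by
  induction k with
  | zero => simpa using hw.1
  | succ k ih =>
    simpa [List.replicate_succ'] using hw.2 _ (s ++ w) ih (by simpa using h)

theorem IsFinitary.exists_periodic [TopologicalSpace A] {X : Set (ℤ → A)} (hcl : IsClosed X)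
    (himg : shiftMap A '' X = X) (hirr : ShiftIrreducible X) {w V : List A}
    (hw : IsFinitary X w) (hV : IsBlockOf X V) (hVne : V ≠ []) :
    ∃ p ∈ X, ∃ N : ℤ, 0 < N ∧ Periodic p N ∧ OccursAt w p 0 ∧ ∃ c, OccursAt V p c := by
  obtain ⟨a, ha⟩ := hirr w V hw.1 hV
  obtain ⟨b, hb⟩ := hirr (w ++ a ++ V) w ha hw.1
  obtain ⟨s, hs⟩ : ∃ s, s = a ++ V ++ b := ⟨_, rfl⟩
  set p := cyclic (w ++ s) (V.head hVne)
  have hper : Periodic p (w ++ s).length := periodic_cyclic _ _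
  have hPp : OccursAt (w ++ s) p 0 := occursAt_cyclic _ _
  have hlen : 0 < ((w ++ s).length : ℤ) := by
    have := List.length_pos_iff.2 hVne
    simp [hs]; omega
  have hwp : ∀ j : ℤ, OccursAt w p (j * (w ++ s).length) := fun j => by
    simpa using hper.occursAt_add_int_mul (occursAt_append_iff.1 hPp).1 j
  refine ⟨p, ?_, _, hlen, hper, by simpa using hwp 0, (w ++ a).length, ?_⟩
  · refine mem_of_forall_exists_block hcl himg fun n =>
      ⟨_, -(n * (w ++ s).length), hw.isBlockOf_flatten_replicate_append (s := s)
        (by simpa [hs] using hb) (2 * n + 1), ?_, ?_, ?_⟩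
    · refine occursAt_append_iff.2 ⟨hper.occursAt_flatten_replicate ?_ _, ?_⟩
      · simpa using hper.occursAt_add_int_mul hPp (-n)
      · convert hwp (n + 1) using 1
        simp only [List.length_flatten, List.map_replicate, List.sum_replicate, smul_eq_mul]
        push_cast; ring
    · nlinarith
    · simp only [List.length_append, List.length_flatten, List.map_replicate,
        List.sum_replicate, smul_eq_mul] at hlen ⊢
      push_cast at hlen ⊢
      nlinarith
  · have hPp' : OccursAt ((w ++ a) ++ V ++ b) p 0 := by simpa [hs] using hPp
    simpa using (occursAt_append_iff.1 (occursAt_append_iff.1 hPp').1).2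

theorem Function.Periodic.finite_range_shiftZ {p : ℤ → A} {N : ℤ} (hp : Periodic p N)
    (hN : 0 < N) : (range fun k => shiftZ A k p).Finite := by
  refine ((finite_Ico 0 N).image fun k => shiftZ A k p).subset ?_
  rintro _ ⟨k, rfl⟩
  refine ⟨k % N, ⟨Int.emod_nonneg _ hN.ne', Int.emod_lt_of_pos _ hN⟩, funext fun i => ?_⟩
  change p (i + k % N) = p (i + k)
  rw [Int.emod_def, show i + (k - N * (k / N)) = i + k - k / N * N by ring]
  exact hp.sub_int_mul_eq _

theorem exists_block_not_occursAt [TopologicalSpace A] [T1Space A] {X : Set (ℤ → A)}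
    (hinf : X.Infinite) {p : ℤ → A} {N : ℤ} (hp : Periodic p N) (hN : 0 < N) :
    ∃ v, IsBlockOf X v ∧ ∀ i, ¬ OccursAt v p i := by
  -- otherwise `X` lies in the closure of the finite orbit of `p`
  by_contra! h
  refine hinf ((hp.finite_range_shiftZ hN).subset fun x hx => ?_)
  refine (hp.finite_range_shiftZ hN).isClosed.mem_of_forall_eqOn_Icc fun n => ?_
  obtain ⟨c, hc⟩ := h (word x (-n) (2 * n + 1)) ⟨x, hx, _, occursAt_word x _ _⟩
  have hc' : OccursAt (word x (-n) (2 * n + 1)) (shiftZ A (c + n) p) (-n) :=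
    occursAt_shiftZ_iff.2 (by convert hc using 1; ring)
  exact ⟨_, mem_range_self _,
    (hc'.eqOn (occursAt_word x _ _)).mono (Icc_subset_Ico le_rfl (by simp; omega))⟩

theorem ShiftIrreducible.exists_loop_not_occursAt {X : Set (ℤ → A)} (hirr : ShiftIrreducible X)
    {w v : List A} (hw : IsBlockOf X w) (hv : IsBlockOf X v) {p : ℤ → A}
    (hvp : ∀ i, ¬ OccursAt v p i) :
    ∃ m, IsBlockOf X (w ++ m ++ w) ∧ ∀ i, ¬ OccursAt (w ++ m ++ w) p i := by
  obtain ⟨u₁, hu₁⟩ := hirr w v hw hv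
  obtain ⟨u₂, hu₂⟩ := hirr (w ++ u₁ ++ v) w hu₁ hw
  refine ⟨u₁ ++ v ++ u₂, by simpa using hu₂, fun i h => hvp (i + (w ++ u₁).length) ?_⟩
  have : OccursAt ((w ++ u₁) ++ v ++ (u₂ ++ w)) p i := by simpa using h
  exact (occursAt_append_iff.1 (occursAt_append_iff.1 this).1).2

section Flip

variable [TopologicalSpace A] {X : Set (ℤ → A)} {ψ : (ℤ → A) → ℤ → A}

theorem IsFlip.apply_shiftZ (hψ : IsFlip X ψ) (himg : shiftMap A '' X = X) {x : ℤ → A}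
    (hx : x ∈ X) (k : ℤ) : ψ (shiftZ A k x) = shiftZ A (-k) (ψ x) := by
  have hback : ∀ y ∈ X, ψ (shiftZ A (-1) y) = shiftZ A 1 (ψ y) := fun y hy => by
    have h := hψ.2.2.2 _ (mem_shiftZ himg hy (-1))
    rw [shiftMap, shiftZ_shiftZ, add_neg_cancel, shiftZ_zero] at h
    rw [h, shiftZ_shiftZ, add_neg_cancel, shiftZ_zero]
  induction k using Int.induction_on with
  | zero => rw [shiftZ_zero, neg_zero, shiftZ_zero]
  | succ n ih =>
    rw [add_comm, ← shiftZ_shiftZ, hψ.2.2.2 _ (mem_shiftZ himg hx _), ih, shiftInv,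
      shiftZ_shiftZ]
    ring_nf
  | pred n ih =>
    rw [sub_eq_neg_add, ← shiftZ_shiftZ, hback _ (mem_shiftZ himg hx _), ih, shiftZ_shiftZ]
    ring_nf

theorem IsFlip.shiftMap_comp (hψ : IsFlip X ψ) (himg : shiftMap A '' X = X) :
    IsFlip X (shiftMap A ∘ ψ) := by
  obtain ⟨hmap, hcont, hinv, hcomm⟩ := hψ
  refine ⟨fun x hx => mem_shiftZ himg (hmap hx) 1,
    (continuous_pi fun i => continuous_apply (i + 1)).comp_continuousOn hcont,
    fun x hx => ?_, fun x hx => ?_⟩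
  · simp only [comp_apply, shiftMap]
    rw [IsFlip.apply_shiftZ ⟨hmap, hcont, hinv, hcomm⟩ himg (hmap hx), hinv x hx,
      shiftZ_shiftZ, add_neg_cancel, shiftZ_zero]
  · simp only [comp_apply, shiftMap, shiftInv]
    rw [hcomm x hx, shiftZ_shiftZ, shiftZ_shiftZ, add_comm]

theorem IsFlip.apply_eq_of_eqOn (hψ : IsFlip X ψ) (himg : shiftMap A '' X = X) {M : ℕ}
    (hM : HasRadius X ψ M) {x y : ℤ → A} (hx : x ∈ X) (hy : y ∈ X) (i : ℤ)
    (h : EqOn x y (Icc (-i - M) (-i + M))) : ψ x i = ψ y i := by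
  have key := hM _ (mem_shiftZ himg hx (-i)) _ (mem_shiftZ himg hy (-i))
    fun t ht => h ⟨by have := ht.1; omega, by have := ht.2; omega⟩
  rwa [hψ.apply_shiftZ himg hx, hψ.apply_shiftZ himg hy, neg_neg, shiftZ_apply, shiftZ_apply,
    zero_add] at key

theorem IsFlip.eqOn_Iic_of_eqOn_Ici (hψ : IsFlip X ψ) (himg : shiftMap A '' X = X) {M : ℕ}
    (hM : HasRadius X ψ M) {x y : ℤ → A} (hx : x ∈ X) (hy : y ∈ X) {T : ℤ}
    (h : EqOn x y (Ici T)) : EqOn (ψ x) (ψ y) (Iic (-T - M)) := fun i hi =>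
  hψ.apply_eq_of_eqOn himg hM hx hy i fun t ht =>
    h (show T ≤ t by linarith [ht.1, show i ≤ -T - M from hi])

theorem IsFlip.eqOn_Ioi_of_eqOn_Iio (hψ : IsFlip X ψ) (himg : shiftMap A '' X = X) {M : ℕ}
    (hM : HasRadius X ψ M) {x y : ℤ → A} (hx : x ∈ X) (hy : y ∈ X) {S : ℤ}
    (h : EqOn x y (Iio S)) : EqOn (ψ x) (ψ y) (Ioi (M - S)) := fun i hi =>
  hψ.apply_eq_of_eqOn himg hM hx hy i fun t ht =>
    h (show t < S by linarith [ht.2, show M - S < i from hi])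

/-- Take for `V` a long enough window of `ψ x₀`, where `w` occurs in `x₀ = ψ (ψ x₀)`. -/
theorem IsFlip.exists_forcing_block [Fintype A] [DiscreteTopology A] (hψ : IsFlip X ψ)
    (hcl : IsClosed X) (himg : shiftMap A '' X = X) {w : List A} (hw : IsBlockOf X w) :
    ∃ V : List A, V ≠ [] ∧ IsBlockOf X V ∧
      ∃ e : ℤ, ∀ x ∈ X, ∀ c, OccursAt V x c → OccursAt w (ψ x) (e - c) := by
  obtain ⟨M, hM⟩ := hψ.2.1.exists_hasRadius hcl
  obtain ⟨x₀, hx₀, hwx₀⟩ := hw.exists_occursAt himg 0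
  set L : ℕ := M + w.length
  set V := word (ψ x₀) (-L) (2 * L + 1)
  refine ⟨V, List.ne_nil_of_length_pos (by simp [V]), ⟨_, hψ.1 hx₀, _, occursAt_word _ _ _⟩,
    -L, fun x hx c hVx => ?_⟩
  set z := shiftZ A (-L - c) (ψ x₀)
  have hz : z ∈ X := mem_shiftZ himg (hψ.1 hx₀) _
  have hVz : OccursAt V z c :=
    occursAt_shiftZ_iff.2 (by convert occursAt_word (ψ x₀) (-L) _ using 1; ring)
  have hwz : OccursAt w (ψ z) (-L - c) := by
    rw [hψ.apply_shiftZ himg (hψ.1 hx₀), hψ.2.2.1 x₀ hx₀, occursAt_shiftZ_iff]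
    convert hwx₀ using 1
    ring
  refine hwz.congr fun j hj => hψ.apply_eq_of_eqOn himg hM hz hx j ((hVz.eqOn hVx).mono ?_)
  have hVlen : V.length = 2 * L + 1 := word_length _ _ _
  simp only [mem_Ico] at hj
  exact Icc_subset_Ico (by omega) (by omega)

theorem IsFlip.finite_setOf_ne (hψ : IsFlip X ψ) (himg : shiftMap A '' X = X) {M : ℕ}
    (hM : HasRadius X ψ M) {x z : ℤ → A} (hx : x ∈ X) (hz : z ∈ X) {S T : ℤ}
    (hleft : EqOn x (ψ z) (Iio S)) (hright : EqOn x z (Ici T)) :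
    {i | ψ x i ≠ x i}.Finite := by
  have hfar_left := hψ.eqOn_Iic_of_eqOn_Ici himg hM hx hz hright
  have hfar_right := hψ.eqOn_Ioi_of_eqOn_Iio himg hM hx (hψ.1 hz) hleft
  refine (finite_Icc (min (-T - M) S) (max T (M - S))).subset fun i hi => ?_
  by_contra hout
  simp only [mem_Icc, not_and_or, not_le] at hout
  refine hi ?_
  rcases hout with h | h
  · have hi₁ : i ≤ -T - M := by omega
    have hi₂ : i < S := by omega
    rw [hfar_left hi₁, hleft hi₂]
  · have hi₁ : M - S < i := by omega
    have hi₂ : T ≤ i := by omega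
    rw [hfar_right hi₁, hψ.2.2.1 z hz, hright hi₂]

/-- The splice `x` of `ψ z`, `w m w` and `z` agrees with `ψ x` far out on both sides, while
`ψ x = x` would force `w m w` into `z`. -/
theorem IsFlip.flipAsym_nonempty_of_splice (hψ : IsFlip X ψ) (hcl : IsClosed X)
    (himg : shiftMap A '' X = X) {M : ℕ} (hM : HasRadius X ψ M) {w m : List A}
    (hw : IsFinitary X w) (hD : IsBlockOf X (w ++ m ++ w)) {z : ℤ → A} (hz : z ∈ X) {S N : ℤ}
    (hS : (M : ℤ) < 2 * S) (hN : 0 < N) (hψz : OccursAt w (ψ z) S)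
    (hzw : ∀ j : ℕ, OccursAt w z (S + (w ++ m).length + j * N))
    (hDz : ¬ OccursAt (w ++ m ++ w) z S) : (flipAsym X ψ).Nonempty := by
  set T := S + ((w ++ m).length : ℤ)
  have hST : S ≤ T := le_add_of_nonneg_right (by positivity)
  obtain ⟨y, hy, hyD⟩ := hD.exists_occursAt himg S
  have hywm := (occursAt_append_iff.1 hyD).1
  set x₁ := splice (ψ z) y S
  have hx₁ : x₁ ∈ X :=
    hw.splice_mem hcl himg (hψ.1 hz) hy hψz (occursAt_append_iff.1 hywm).1
  have hx₁T : OccursAt w x₁ T := (occursAt_append_iff.1 hyD).2.congr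
    ((splice_eqOn_Ici _ _ _).symm.mono fun j hj => by simp only [mem_Ico, mem_Ici] at hj ⊢; omega)
  set x := splice x₁ z T
  have hx : x ∈ X := hw.splice_mem hcl himg hx₁ hz hx₁T (by simpa using hzw 0)
  have hright : EqOn x z (Ici T) := splice_eqOn_Ici _ _ _
  have hleft : EqOn x (ψ z) (Iio S) := fun j hj =>
    (splice_eqOn_Iio _ _ _ (lt_of_lt_of_le hj hST)).trans (splice_eqOn_Iio _ _ _ hj)
  have hxD : OccursAt (w ++ m ++ w) x S := occursAt_append_iff.2
    ⟨hywm.congr fun j hj => ((splice_eqOn_Iio _ _ _ hj.2).trans (splice_eqOn_Ici _ _ _ hj.1)).symm,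
     (by simpa using hzw 0 : OccursAt w z T).congr (hright.symm.mono Ico_subset_Ici_self)⟩
  refine ⟨x, hx, ⟨w, hw, ?_⟩, ?_, hψ.finite_setOf_ne himg hM hx hz hleft hright⟩
  · refine infinite_of_injective_forall_mem (f := fun j : ℕ => T + j * N) ?_ fun j =>
      (hzw j).congr (hright.symm.mono fun i hi => ?_)
    · intro j k hjk
      simpa [hN.ne'] using hjk
    · simp only [mem_Ico, mem_Ici] at hi ⊢
      nlinarith
  · by_contra hne
    have hfix : ∀ i, ψ x i = x i := fun i => by_contra fun h => hne ⟨i, h⟩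
    have hxz : EqOn x z (Ioi (M - S)) := fun i hi => by
      rw [← hfix i, hψ.eqOn_Ioi_of_eqOn_Iio himg hM hx (hψ.1 hz) hleft hi, hψ.2.2.1 z hz]
    exact hDz (hxD.congr (hxz.mono fun i hi => by simp only [mem_Ico, mem_Ioi] at hi ⊢; omega))

theorem IsFlip.flipAsym_nonempty_of_even [Fintype A] [DiscreteTopology A] (hψ : IsFlip X ψ)
    (hcl : IsClosed X) (himg : shiftMap A '' X = X) {w m : List A} (hw : IsFinitary X w)
    (hD : IsBlockOf X (w ++ m ++ w)) {p : ℤ → A} (hp : p ∈ X) {N : ℤ} (hN : 0 < N)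
    (hper : Periodic p N) (hpw : OccursAt w p 0) (hDp : ∀ i, ¬ OccursAt (w ++ m ++ w) p i)
    {g : ℤ} (hψp : OccursAt w (ψ p) g) (hg : Even (g - (w ++ m).length)) :
    (flipAsym X ψ).Nonempty := by
  obtain ⟨M, hM⟩ := hψ.2.1.exists_hasRadius hcl
  obtain ⟨S₀, hS₀⟩ := hg
  -- splice at `S = S₀ + u N`, with `u` large enough that `M < 2 S`, taking `z = σ^(S - g) p`
  set u : ℤ := M + |S₀| + 1
  have hS : (M : ℤ) < 2 * (S₀ + u * N) := by
    have : u ≤ u * N := le_mul_of_one_le_right (by positivity) hN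
    linarith [neg_abs_le S₀]
  refine hψ.flipAsym_nonempty_of_splice hcl himg hM hw hD (mem_shiftZ himg hp (S₀ + u * N - g))
    hS hN ?_ (fun j => ?_) fun h => hDp _ (occursAt_shiftZ_iff.1 h)
  · rw [hψ.apply_shiftZ himg hp, occursAt_shiftZ_iff]
    convert hψp using 1
    ring
  · rw [occursAt_shiftZ_iff]
    convert hper.occursAt_add_int_mul hpw (2 * u + j) using 1
    linear_combination -hS₀

end Flip

end

/-- **Proposition C.** If `X` is an infinite synchronized system and `φ` is a flip for
`(X, σ_X)`, then at least one of `A(φ)` and `A(σ_X ∘ φ)` is non-empty. -/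
theorem flipAsym_nonempty_or
    {A : Type*} [Fintype A] [TopologicalSpace A] [DiscreteTopology A]
    (X : Set (ℤ → A)) (hX : IsSynchronized X) (hinf : X.Infinite)
    (φ : (ℤ → A) → ℤ → A) (hφ : IsFlip X φ) :
    (flipAsym X φ).Nonempty ∨ (flipAsym X (shiftMap A ∘ φ)).Nonempty := by
  obtain ⟨⟨-, hcl, himg⟩, hirr, w, hw⟩ := hX
  obtain ⟨V, hVne, hV, e, hVw⟩ := hφ.exists_forcing_block hcl himg hw.1
  obtain ⟨p, hp, N, hN, hper, hpw, c, hpV⟩ := hw.exists_periodic hcl himg hirr hV hVne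
  obtain ⟨v, hv, hvp⟩ := exists_block_not_occursAt hinf hper hN
  obtain ⟨m, hD, hDp⟩ := hirr.exists_loop_not_occursAt hw.1 hv hvp
  have hφp : OccursAt w (φ p) (e - c) := hVw p hp c hpV
  rcases Int.even_or_odd (e - c - (w ++ m).length) with heven | ⟨k, hk⟩
  · exact .inl (hφ.flipAsym_nonempty_of_even hcl himg hw hD hp hN hper hpw hDp hφp heven)
  · refine .inr ((hφ.shiftMap_comp himg).flipAsym_nonempty_of_even hcl himg hw hD hp hN hper
      hpw hDp (g := e - c - 1) ?_ ⟨k, by omega⟩)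
    exact occursAt_shiftZ_iff.2 (by simpa using hφp)
end

section
/- For every shift space X and every flip φ for (X, σ_X), there exist a finite alphabet A', a shift space Y over A', and a one-block flip ψ for (Y, σ_Y) such that the shift-flip system (Y, σ_Y, ψ) is conjugate to (X, σ_X, φ). -/
open Set Function

/-!
Recode `x` as the sequence of pairs `i ↦ (x_i, φ(x)_{-i})`. Because `φ` is an involution
reversing the shift, the recoding of `φ(x)` is the reversal of this sequence with the two
entries of every symbol swapped: a one-block flip. The first entries recover `x`.
-/

section ShiftSpace

variable {A B : Type*} [TopologicalSpace A] [TopologicalSpace B]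

theorem IsShiftSpace.image [CompactSpace A] [T2Space B] {X : Set (ℤ → A)}
    (hX : IsShiftSpace X) {Φ : (ℤ → A) → ℤ → B} (hΦ : ContinuousOn Φ X)
    (hΦσ : ∀ x ∈ X, Φ (shiftMap A x) = shiftMap B (Φ x)) : IsShiftSpace (Φ '' X) := by
  refine ⟨hX.1.image Φ, (hX.2.1.isCompact.image_of_continuousOn hΦ).isClosed, ?_⟩
  calc shiftMap B '' (Φ '' X) = (fun x => Φ (shiftMap A x)) '' X := by
        rw [image_image]; exact image_congr fun x hx => (hΦσ x hx).symm
    _ = Φ '' X := by rw [← image_image, hX.2.2]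

theorem systemConj_image {X : Set (ℤ → A)} {φ : (ℤ → A) → ℤ → A} {ψ : (ℤ → B) → ℤ → B}
    {Φ : (ℤ → A) → ℤ → B} {Ψ : (ℤ → B) → ℤ → A} (hΦ : ContinuousOn Φ X) (hΨ : Continuous Ψ)
    (hΨΦ : ∀ x ∈ X, Ψ (Φ x) = x) (hΦσ : ∀ x ∈ X, Φ (shiftMap A x) = shiftMap B (Φ x))
    (hΦφ : ∀ x ∈ X, Φ (φ x) = ψ (Φ x)) : SystemConj X φ (Φ '' X) ψ := by
  have hinv : InvOn Ψ Φ X (Φ '' X) := by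
    refine ⟨hΨΦ, ?_⟩
    rintro _ ⟨x, hx, rfl⟩
    rw [hΨΦ x hx]
  refine ⟨Φ, Ψ, mapsTo_image Φ X, hΦ, ?_, hΨ.continuousOn, hinv, hΦσ, hΦφ⟩
  rintro _ ⟨x, hx, rfl⟩
  rwa [hΨΦ x hx]

end ShiftSpace

section OneBlockFlip

variable {B : Type*}

def oneBlockFlip (τ : B → B) : (ℤ → B) → ℤ → B := fun y i => τ (y (-i))

theorem oneBlockFlip_involutive {τ : B → B} (hτ : Involutive τ) :
    Involutive (oneBlockFlip τ) := fun y => funext fun i => by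
  simp only [oneBlockFlip, neg_neg, hτ (y i)]

theorem oneBlockFlip_shiftMap (τ : B → B) (y : ℤ → B) :
    oneBlockFlip τ (shiftMap B y) = shiftInv B (oneBlockFlip τ y) := funext fun i => by
  simp only [oneBlockFlip, shiftZ, neg_add, neg_neg]

theorem isFlip_oneBlockFlip [TopologicalSpace B] {τ : B → B} (hτc : Continuous τ)
    (hτ : Involutive τ) {Y : Set (ℤ → B)} (hY : MapsTo (oneBlockFlip τ) Y Y) :
    IsFlip Y (oneBlockFlip τ) :=
  ⟨hY, (continuous_pi fun i => hτc.comp (continuous_apply (-i))).continuousOn,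
    fun y _ => oneBlockFlip_involutive hτ y, fun y _ => oneBlockFlip_shiftMap τ y⟩

end OneBlockFlip

section Recoding

variable {A B : Type*} (e : A × A ≃ B)

def flipRecode (φ : (ℤ → A) → ℤ → A) (x : ℤ → A) : ℤ → B := fun i => e (x i, φ x (-i))

def flipDecode (y : ℤ → B) : ℤ → A := fun i => (e.symm (y i)).1

def swapSymbol (b : B) : B := e (e.symm b).swap

theorem swapSymbol_involutive : Involutive (swapSymbol e) := fun b => by
  simp only [swapSymbol, Equiv.symm_apply_apply, Prod.swap_swap, Equiv.apply_symm_apply]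

variable {φ : (ℤ → A) → ℤ → A}

theorem flipDecode_flipRecode (x : ℤ → A) : flipDecode e (flipRecode e φ x) = x :=
  funext fun i => by simp only [flipDecode, flipRecode, Equiv.symm_apply_apply]

theorem flipRecode_shiftMap {x : ℤ → A} (hx : φ (shiftMap A x) = shiftInv A (φ x)) :
    flipRecode e φ (shiftMap A x) = shiftMap B (flipRecode e φ x) := funext fun i => by
  simp only [flipRecode, hx, shiftZ, neg_add]

theorem flipRecode_flip {x : ℤ → A} (hx : φ (φ x) = x) :
    flipRecode e φ (φ x) = oneBlockFlip (swapSymbol e) (flipRecode e φ x) := funext fun i => by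
  simp only [flipRecode, oneBlockFlip, swapSymbol, hx, neg_neg, Equiv.symm_apply_apply,
    Prod.swap_prod_mk]

theorem ContinuousOn.flipRecode [TopologicalSpace A] [DiscreteTopology A] [TopologicalSpace B]
    {X : Set (ℤ → A)} (hφ : ContinuousOn φ X) : ContinuousOn (flipRecode e φ) X :=
  continuousOn_pi.2 fun i => continuous_of_discreteTopology.comp_continuousOn <|
    (continuous_apply i).continuousOn.prodMk ((continuous_apply (-i)).comp_continuousOn hφ)

theorem continuous_flipDecode [TopologicalSpace A] [TopologicalSpace B] [DiscreteTopology B] :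
    Continuous (flipDecode e) :=
  continuous_pi fun i => (continuous_of_discreteTopology (f := fun b => (e.symm b).1)).comp
    (continuous_apply i)

end Recoding

/-- **Lemma 2.1.** Every flip for a shift dynamical system can be recoded to a one-block
flip: for every shift space `X` and flip `φ` for `(X, σ_X)` there are a finite alphabet,
a shift space `Y` over it, and a one-block flip `ψ` for `(Y, σ_Y)` such that
`(Y, σ_Y, ψ)` is conjugate to `(X, σ_X, φ)`. -/
theorem exists_one_block_flip_conjugate
    {A : Type*} [Fintype A] [TopologicalSpace A] [DiscreteTopology A]
    (X : Set (ℤ → A)) (hX : IsShiftSpace X)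
    (φ : (ℤ → A) → ℤ → A) (hφ : IsFlip X φ) :
    ∃ (N : ℕ) (Y : Set (ℤ → Fin N)) (ψ : (ℤ → Fin N) → ℤ → Fin N),
      IsShiftSpace Y ∧ IsFlip Y ψ ∧
      (∃ τ : Fin N → Fin N, ∀ y ∈ Y, ∀ i : ℤ, ψ y i = τ (y (-i))) ∧
      SystemConj X φ Y ψ := by
  obtain ⟨hmaps, hcont, hinvol, hshift⟩ := hφ
  let e := Fintype.equivFin (A × A)
  have hΦσ : ∀ x ∈ X, flipRecode e φ (shiftMap A x) = shiftMap _ (flipRecode e φ x) :=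
    fun x hx => flipRecode_shiftMap e (hshift x hx)
  have hΦφ : ∀ x ∈ X, flipRecode e φ (φ x) = oneBlockFlip (swapSymbol e) (flipRecode e φ x) :=
    fun x hx => flipRecode_flip e (hinvol x hx)
  have hYψ : MapsTo (oneBlockFlip (swapSymbol e)) (flipRecode e φ '' X)
      (flipRecode e φ '' X) := by
    rintro _ ⟨x, hx, rfl⟩
    exact ⟨φ x, hmaps hx, hΦφ x hx⟩
  refine ⟨_, flipRecode e φ '' X, oneBlockFlip (swapSymbol e),
    hX.image (hcont.flipRecode e) hΦσ,
    isFlip_oneBlockFlip continuous_of_discreteTopology (swapSymbol_involutive e) hYψ,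
    ⟨swapSymbol e, fun _ _ _ => rfl⟩, ?_⟩
  exact systemConj_image (hcont.flipRecode e) (continuous_flipDecode e)
    (fun x _ => flipDecode_flipRecode e x) hΦσ hΦφ
end

section
/- For every n ≥ 1, the block 0^n is stable; the block 1^n is stable if and only if n ∈ I; and the block 2^n is stable if and only if n ∉ I. -/
open Set Function

/-- The set `I = ⋃_{k ≥ 1} [2^{2k}, 2^{2k+1}] ⊆ ℕ`. -/
def wordI : Set ℕ := {n | ∃ k : ℕ, 1 ≤ k ∧ 2 ^ (2 * k) ≤ n ∧ n ≤ 2 ^ (2 * k + 1)}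

/-- The set `J = {(0,0), (1,1), (1,2), (2,1), (2,2)} ⊆ A × A`, `A = {0,1,2}`. -/
def setJ : Set (Fin 3 × Fin 3) := {(0, 0), (1, 1), (1, 2), (2, 1), (2, 2)}

/-- The word `0^n` over `{0,1,2}`. -/
def zeros (n : ℕ) : List (Fin 3) := List.replicate n 0

/-- A word `w` over `{0,1,2}` is stable if (1) neither `12` nor `21` occurs in `w`, and
(2) whenever `x ∈ A^ℤ` satisfies `x_{[1, 3|w|+2]} = 0^{|w|+1} w 0^{|w|+1}`, and
`1 ≤ n ≤ |w|`, `a ∈ {1,2}`, `|w|+1 ≤ i < j ≤ 2|w|+2` are such that `x_{[i,j]} = 0 aⁿ 0`,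
then `a = 1` iff `(n, (x_{i-n}, x_{j+n})) ∈ (I × J) ∪ (Iᶜ × Jᶜ)`. -/
def Stable (w : List (Fin 3)) : Prop :=
  (¬ [1, 2] <:+: w) ∧ (¬ [2, 1] <:+: w) ∧
    ∀ x : ℤ → Fin 3,
      OccursAt (zeros (w.length + 1) ++ w ++ zeros (w.length + 1)) x 1 →
      ∀ (n : ℕ) (a : Fin 3) (i j : ℤ),
        1 ≤ n → n ≤ w.length → (a = 1 ∨ a = 2) →
        (w.length : ℤ) + 1 ≤ i → i < j → j ≤ 2 * (w.length : ℤ) + 2 →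
        j = i + n + 1 → x i = 0 → x j = 0 → (∀ k : ℤ, i < k → k < j → x k = a) →
        (a = 1 ↔ (n ∈ wordI ∧ (x (i - n), x (j + n)) ∈ setJ) ∨
          (n ∉ wordI ∧ (x (i - n), x (j + n)) ∉ setJ))

/-- The code `C = {0} ∪ {0^{|w|+1} w 0^{|w|+1} : w is stable}`. -/
def codeC : Set (List (Fin 3)) :=
  {[0]} ∪ {u | ∃ w : List (Fin 3), Stable w ∧
    u = zeros (w.length + 1) ++ w ++ zeros (w.length + 1)}

/-- The coded system `W`: the closure of the set of bi-infinite concatenations of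
words from the code `C`. -/
def spaceW : Set (ℤ → Fin 3) := closure {x | IsConcat codeC x}

/-- `W₀ = {x ∈ W : x_i ≠ 0 for only finitely many i}`. -/
def spaceW0 : Set (ℤ → Fin 3) := {x ∈ spaceW | {i : ℤ | x i ≠ 0}.Finite}

/-!
In `0ⁿ⁺¹ aⁿ 0ⁿ⁺¹` with `a ≠ 0`, the only run `0 bᵐ 0` (`b ≠ 0`) in the window `[n+1, 2n+2]` is
the block `aⁿ` itself, and the letters at distance `n` outside it are the outer zeros. Since
`(0, 0) ∈ J`, condition (2) for `aⁿ` therefore says exactly `a = 1 ↔ n ∈ I`. For `a = 0` there is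
no such run at all, and a constant word contains neither `12` nor `21`.
-/

open List

lemma List.not_pair_infix_replicate {α : Type*} {a b c : α} (hab : a ≠ b) (n : ℕ) :
    ¬ [a, b] <:+: replicate n c := fun h =>
  hab <| (eq_of_mem_replicate (h.subset (by simp))).trans
    (eq_of_mem_replicate (h.subset (by simp))).symm

def padded (w : List (Fin 3)) : List (Fin 3) := zeros (w.length + 1) ++ w ++ zeros (w.length + 1)

def paddedPoint (n : ℕ) (a : Fin 3) (t : ℤ) : Fin 3 := if n + 2 ≤ t ∧ t ≤ 2 * n + 1 then a else 0

lemma getElem_padded_replicate (n : ℕ) (a : Fin 3) (k : ℕ)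
    (hk : k < (padded (replicate n a)).length) :
    (padded (replicate n a))[k] = if n + 1 ≤ k ∧ k < 2 * n + 1 then a else 0 := by
  simp only [padded, zeros, length_append, length_replicate] at hk ⊢
  simp only [getElem_append, getElem_replicate, length_append, length_replicate]
  split_ifs <;> first | rfl | omega

lemma occursAt_padded_replicate_iff {n : ℕ} {a : Fin 3} {x : ℤ → Fin 3} :
    OccursAt (padded (replicate n a)) x 1 ↔
      ∀ t : ℤ, 1 ≤ t → t ≤ 3 * n + 2 → x t = paddedPoint n a t := by
  have hlen : (padded (replicate n a)).length = 3 * n + 2 := by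
    simp only [padded, zeros, length_append, length_replicate]; omega
  constructor
  · intro h t h1 h2
    obtain ⟨k, rfl⟩ : ∃ k : ℕ, t = 1 + k := ⟨(t - 1).toNat, by omega⟩
    have := h ⟨k, by omega⟩
    simp only [get_eq_getElem, getElem_padded_replicate] at this
    rw [this, paddedPoint]
    split_ifs <;> first | rfl | omega
  · intro h k
    rw [get_eq_getElem, getElem_padded_replicate, h _ (by omega) (by omega), paddedPoint]
    split_ifs <;> first | rfl | omega

lemma eq_of_run_in_padded_replicate {n : ℕ} {a b : Fin 3} {x : ℤ → Fin 3} {i j : ℤ}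
    (hx : OccursAt (padded (replicate n a)) x 1) (hb : b ≠ 0)
    (hi : n + 1 ≤ i) (hij : i + 1 < j) (hj : j ≤ 2 * n + 2) (hxi : x i = 0) (hxj : x j = 0)
    (hrun : ∀ k, i < k → k < j → x k = b) :
    b = a ∧ i = n + 1 ∧ j = 2 * n + 2 := by
  rw [occursAt_padded_replicate_iff] at hx
  have hmid : ∀ t : ℤ, n + 2 ≤ t → t ≤ 2 * n + 1 → x t = a := fun t h1 h2 => by
    rw [hx t (by omega) (by omega), paddedPoint, if_pos ⟨h1, h2⟩]
  have hba : b = a := by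
    have hxb := hrun (i + 1) (by omega) (by omega)
    rw [hx _ (by omega) (by omega), paddedPoint] at hxb
    split_ifs at hxb
    · exact hxb.symm
    · exact absurd hxb.symm hb
  subst hba
  refine ⟨rfl, ?_, ?_⟩
  · by_contra
    exact hb ((hmid i (by omega) (by omega)).symm.trans hxi)
  · by_contra
    exact hb ((hmid j (by omega) (by omega)).symm.trans hxj)

lemma zero_zero_mem_setJ : ((0 : Fin 3), (0 : Fin 3)) ∈ setJ := Set.mem_insert _ _

lemma stable_replicate_of {n : ℕ} {a : Fin 3} (h : a ≠ 0 → (a = 1 ↔ n ∈ wordI)) :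
    Stable (replicate n a) := by
  refine ⟨not_pair_infix_replicate (by decide) n, not_pair_infix_replicate (by decide) n, ?_⟩
  intro x hx m b i j _ _ hb hi _ hj hji hxi hxj hrun
  rw [length_replicate] at hi hj
  have hb0 : b ≠ 0 := by rcases hb with rfl | rfl <;> decide
  obtain ⟨rfl, rfl, rfl⟩ := eq_of_run_in_padded_replicate hx hb0 hi (by omega) hj hxi hxj hrun
  obtain rfl : m = n := by omega
  replace hx := occursAt_padded_replicate_iff.1 hx
  rw [hx _ (by omega) (by omega), hx _ (by omega) (by omega), paddedPoint, paddedPoint,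
    if_neg (by omega), if_neg (by omega)]
  simpa [zero_zero_mem_setJ] using h hb0

lemma Stable.eq_one_iff_mem_wordI {n : ℕ} {a : Fin 3} (hs : Stable (replicate n a))
    (hn : 1 ≤ n) (ha : a ≠ 0) : a = 1 ↔ n ∈ wordI := by
  have ha' : a = 1 ∨ a = 2 := by fin_cases a <;> simp_all
  have hx : OccursAt (padded (replicate n a)) (paddedPoint n a) 1 :=
    occursAt_padded_replicate_iff.2 fun _ _ _ => rfl
  have := hs.2.2 _ hx n a (n + 1) (2 * n + 2) hn (by simp) ha' (by simp) (by omega)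
    (by simp) (by omega) (if_neg (by omega)) (if_neg (by omega))
    (fun k h1 h2 => if_pos ⟨by omega, by omega⟩)
  rw [paddedPoint, paddedPoint, if_neg (by omega), if_neg (by omega)] at this
  simpa [zero_zero_mem_setJ] using this

lemma stable_replicate_iff {n : ℕ} (hn : 1 ≤ n) (a : Fin 3) :
    Stable (replicate n a) ↔ (a ≠ 0 → (a = 1 ↔ n ∈ wordI)) :=
  ⟨fun hs => hs.eq_one_iff_mem_wordI hn, stable_replicate_of⟩

/-- For every `n ≥ 1`: the block `0^n` is stable; `1^n` is stable iff `n ∈ I`;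
and `2^n` is stable iff `n ∉ I`. -/
theorem stable_replicate (n : ℕ) (hn : 1 ≤ n) :
    Stable (List.replicate n (0 : Fin 3)) ∧
    (Stable (List.replicate n (1 : Fin 3)) ↔ n ∈ wordI) ∧
    (Stable (List.replicate n (2 : Fin 3)) ↔ n ∉ wordI) := by
  simp [stable_replicate_iff hn]
end

section
/- If the block w = w_1 w_2 ⋯ w_{|w|} over {0,1,2} is stable, then the reversed block w_{|w|} ⋯ w_2 w_1 is stable. -/
open Set Function

theorem setJ_swap_mem_iff (p q : Fin 3) : (p, q) ∈ setJ ↔ (q, p) ∈ setJ := by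
  revert p q
  simp only [setJ, Set.mem_insert_iff, Set.mem_singleton_iff]
  decide

theorem OccursAt.reverse {A : Type*} {u : List A} {x : ℤ → A} {i j c : ℤ}
    (h : OccursAt u x i) (hc : i + j + u.length = c + 1) :
    OccursAt u.reverse (fun m => x (c - m)) j := by
  intro k
  have hk : (k : ℕ) < u.length := by simpa using k.isLt
  have hpos := h ⟨u.length - 1 - k, by omega⟩
  simp only [List.get_eq_getElem, List.getElem_reverse] at hpos ⊢
  rw [← hpos]
  congr 1
  push_cast [show (k : ℕ) ≤ u.length - 1 by omega, show 1 ≤ u.length by omega]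
  omega

theorem zeros_append_reverse_append_zeros (m : ℕ) (w : List (Fin 3)) :
    zeros m ++ w.reverse ++ zeros m = (zeros m ++ w ++ zeros m).reverse := by
  simp [zeros]

/-- If a block over `{0,1,2}` is stable, then so is its reversal. -/
theorem stable_reverse (w : List (Fin 3)) (hw : Stable w) : Stable w.reverse := by
  obtain ⟨h12, h21, hwindow⟩ := hw
  refine ⟨fun h => h21 (List.reverse_infix.mp (by simpa using h)),
    fun h => h12 (List.reverse_infix.mp (by simpa using h)), ?_⟩
  intro x hx n a i j hn1 hnL ha hi hij hj hji hxi hxj hmid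
  simp only [List.length_reverse] at hnL hi hj hx
  set L := w.length
  -- reflecting through `m ↦ 3L + 3 - m` maps the window `[1, 3L + 2]` onto itself and swaps
  -- the letters `x (i - n)`, `x (j + n)` flanking the run, which `setJ` does not distinguish
  have hy : OccursAt (zeros (L + 1) ++ w ++ zeros (L + 1)) (fun m => x (3 * L + 3 - m)) 1 := by
    rw [zeros_append_reverse_append_zeros] at hx
    simpa using hx.reverse (c := 3 * L + 3) (j := 1) (by simp [zeros]; omega)
  have key := hwindow _ hy n a (3 * L + 3 - j) (3 * L + 3 - i) hn1 hnL ha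
    (by omega) (by omega) (by omega) (by omega) (by simpa) (by simpa)
    (fun k hk1 hk2 => hmid _ (by omega) (by omega))
  rw [show (3 * L + 3 : ℤ) - (3 * L + 3 - j - n) = j + n by ring,
    show (3 * L + 3 : ℤ) - (3 * L + 3 - i + n) = i - n by ring] at key
  rw [key, setJ_swap_mem_iff]
end
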